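/- arXiv:2509.02978 — 2 statements merged into one kernel-verified Lean document; each statement's English description precedes it below -/
import Mathlib

section
/- Let d > 2 and let v be a smooth positive function on ℝ^n satisfying Δv = (d/2)v^{−1}|∇v|². Then pointwise, div(v^{1−d}(∇_{∇v}∇v − (Δv/d)∇v)) = v^{1−d}( |∇²v − (Δv/n)g|² + (1/n − 1/d)(Δv)² ). -/
noncomputable section

open Real MeasureTheory Metric

variable {n : ℕ}

/-- `i`-th partial derivative of `v` at `x` (Euclidean coordinates). -/
def pd (v : EuclideanSpace ℝ (Fin n) → ℝ) (i : Fin n) (x : EuclideanSpace ℝ (Fin n)) : ℝ :=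
  fderiv ℝ v x (EuclideanSpace.single i 1)

/-- Hessian component `(∇²v)_{ij}` at `x`. -/
def hess (v : EuclideanSpace ℝ (Fin n) → ℝ) (i j : Fin n) (x : EuclideanSpace ℝ (Fin n)) : ℝ :=
  pd (pd v j) i x

/-- Laplacian `Δv` at `x`. -/
def lap (v : EuclideanSpace ℝ (Fin n) → ℝ) (x : EuclideanSpace ℝ (Fin n)) : ℝ :=
  ∑ i, hess v i i x

/-- Divergence of a vector field given by its component functions. -/
def vdiv (X : Fin n → EuclideanSpace ℝ (Fin n) → ℝ) (x : EuclideanSpace ℝ (Fin n)) : ℝ :=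
  ∑ i, pd (X i) i x

section helpers
variable {m : ℕ}

lemma contDiff_pd {f : EuclideanSpace ℝ (Fin m) → ℝ} (hf : ContDiff ℝ (⊤ : ℕ∞) f) (i : Fin m) :
    ContDiff ℝ (⊤ : ℕ∞) (pd f i) := by
  have h1 : ContDiff ℝ (⊤ : ℕ∞) (fun x => fderiv ℝ f x) := hf.fderiv_right (by simp)
  exact h1.clm_apply contDiff_const

variable {f g : EuclideanSpace ℝ (Fin m) → ℝ} {x : EuclideanSpace ℝ (Fin m)}

lemma pd_sub (hf : DifferentiableAt ℝ f x) (hg : DifferentiableAt ℝ g x) (i : Fin m) :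
    pd (fun y => f y - g y) i x = pd f i x - pd g i x := by
  unfold pd; rw [fderiv_fun_sub hf hg]; simp

lemma pd_mul (hf : DifferentiableAt ℝ f x) (hg : DifferentiableAt ℝ g x) (i : Fin m) :
    pd (fun y => f y * g y) i x = f x * pd g i x + g x * pd f i x := by
  unfold pd; rw [fderiv_fun_mul hf hg]; simp

lemma pd_sum {ι : Type*} (s : Finset ι) (F : ι → EuclideanSpace ℝ (Fin m) → ℝ)
    (hf : ∀ j ∈ s, DifferentiableAt ℝ (F j) x) (i : Fin m) :
    pd (fun y => ∑ j ∈ s, F j y) i x = ∑ j ∈ s, pd (F j) i x := by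
  unfold pd; rw [fderiv_fun_sum hf]; simp

lemma pd_const_mul (hf : DifferentiableAt ℝ f x) (c : ℝ) (i : Fin m) :
    pd (fun y => c * f y) i x = c * pd f i x := by
  unfold pd; rw [fderiv_const_mul hf c]; simp

lemma pd_div_const (hf : DifferentiableAt ℝ f x) (c : ℝ) (i : Fin m) :
    pd (fun y => f y / c) i x = pd f i x / c := by
  have e : (fun y => f y / c) = fun y => c⁻¹ * f y := by funext y; rw [div_eq_mul_inv]; ring
  rw [e, pd_const_mul hf c⁻¹ i, div_eq_mul_inv]; ring

lemma pd_sq (hf : DifferentiableAt ℝ f x) (i : Fin m) :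
    pd (fun y => f y ^ 2) i x = 2 * f x * pd f i x := by
  have e : (fun y => f y ^ 2) = fun y => f y * f y := by funext y; ring
  rw [e, pd_mul hf hf i]; ring

lemma pd_rpow (hf : DifferentiableAt ℝ f x) (hx : f x ≠ 0) (p : ℝ) (i : Fin m) :
    pd (fun y => f y ^ p) i x = p * f x ^ (p - 1) * pd f i x := by
  unfold pd
  rw [(hf.hasFDerivAt.rpow_const (Or.inl hx)).fderiv]
  simp [mul_assoc]

lemma pd_comm (hf : ContDiff ℝ (⊤ : ℕ∞) f) (i j : Fin m) (x : EuclideanSpace ℝ (Fin m)) :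
    pd (pd f i) j x = pd (pd f j) i x := by
  have hfd : DifferentiableAt ℝ (fun y => fderiv ℝ f y) x :=
    ((hf.fderiv_right (m := (⊤ : ℕ∞)) (by simp)).differentiable (by simp)) x
  have hsymm := second_derivative_symmetric (f := f) (f' := fun y => fderiv ℝ f y)
      (f'' := fderiv ℝ (fun y => fderiv ℝ f y) x)
      (fun y => (hf.differentiable (by simp) y).hasFDerivAt) hfd.hasFDerivAt
  have key : ∀ a b : Fin m, pd (pd f a) b x
      = fderiv ℝ (fun y => fderiv ℝ f y) x (EuclideanSpace.single b 1)
          (EuclideanSpace.single a 1) := by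
    intro a b
    show fderiv ℝ (fun y => fderiv ℝ f y (EuclideanSpace.single a 1)) x
        (EuclideanSpace.single b 1) = _
    rw [fderiv_clm_apply hfd (differentiableAt_const _)]
    simp
  rw [key, key, hsymm]

end helpers

/-- If `v > 0` is smooth on `ℝⁿ` and satisfies `Δv = (d/2)v^{−1}|∇v|²` with `d > 2`, then
`div(v^{1−d}(∇_{∇v}∇v − (Δv/d)∇v)) = v^{1−d}(|∇²v − (Δv/n)g|² + (1/n − 1/d)(Δv)²)`. -/
theorem stmt7 (n : ℕ) (hn : 0 < n)
    (v : EuclideanSpace ℝ (Fin n) → ℝ) (hv : ContDiff ℝ (⊤ : ℕ∞) v)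
    (hpos : ∀ x, 0 < v x) (d : ℝ) (hd : 2 < d)
    (hpde : ∀ x, lap v x = d / 2 * (v x)⁻¹ * ∑ i, (pd v i x) ^ 2) :
    ∀ x, vdiv (fun i y => v y ^ (1 - d) *
        ((∑ j, pd v j y * hess v j i y) - lap v y / d * pd v i y)) x
      = v x ^ (1 - d) *
        ((∑ i, ∑ j, (hess v i j x - (if i = j then lap v x / n else 0)) ^ 2)
          + (1 / n - 1 / d) * (lap v x) ^ 2) := by
  intro x
  have hd0 : d ≠ 0 := by linarith
  have hn0 : (n : ℝ) ≠ 0 := Nat.cast_ne_zero.mpr hn.ne'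
  have dv : Differentiable ℝ v := hv.differentiable (by simp)
  have dpd : ∀ j, Differentiable ℝ (pd v j) := fun j => (contDiff_pd hv j).differentiable (by simp)
  have dhess : ∀ a b, Differentiable ℝ (hess v a b) :=
    fun a b => (contDiff_pd (contDiff_pd hv b) a).differentiable (by simp)
  have dlap : Differentiable ℝ (lap v) :=
    fun y => DifferentiableAt.fun_sum fun i _ => dhess i i y
  -- symmetric second derivatives
  have hsymm2 : ∀ a b, hess v a b x = hess v b a x := fun a b => pd_comm hv b a x
  have hswap3 : ∀ i j, pd (hess v j i) i x = pd (hess v i i) j x :=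
    fun i j => pd_comm (contDiff_pd hv i) j i x
  have hlapdef : (∑ i, hess v i i x) = lap v x := rfl
  -- abbreviation for the weight
  set W : ℝ := v x ^ (-d : ℝ) with hW
  have hVW : v x ^ (1 - d) = v x * W := by
    rw [hW, show (1 : ℝ) - d = 1 + (-d) by ring, Real.rpow_add (hpos x), Real.rpow_one]
  -- differentiability of the pieces
  have dA : ∀ i, DifferentiableAt ℝ (fun y => ∑ j, pd v j y * hess v j i y) x :=
    fun i => DifferentiableAt.fun_sum fun j _ => ((dpd j x).mul (dhess j i x))
  have dC : DifferentiableAt ℝ (fun y => lap v y / d) x := by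
    simp only [div_eq_mul_inv]
    exact (dlap x).mul_const d⁻¹
  have dB : ∀ i, DifferentiableAt ℝ (fun y => lap v y / d * pd v i y) x :=
    fun i => dC.mul (dpd i x)
  have dBr : ∀ i, DifferentiableAt ℝ
      (fun y => (∑ j, pd v j y * hess v j i y) - lap v y / d * pd v i y) x :=
    fun i => (dA i).sub (dB i)
  have dR : DifferentiableAt ℝ (fun y => v y ^ (1 - d)) x :=
    (dv x).rpow_const (Or.inl (hpos x).ne')
  -- differentiated PDE
  have hzero : (fun y => v y * lap v y - d / 2 * ∑ i, pd v i y ^ 2) = (fun _ => (0 : ℝ)) := by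
    funext y
    have hne : v y ≠ 0 := (hpos y).ne'
    rw [hpde y]
    field_simp
    ring
  have hFk : ∀ k, pd (fun y => v y * lap v y - d / 2 * ∑ i, pd v i y ^ 2) k x = 0 := by
    intro k
    rw [hzero]
    simp [pd]
  have hk : ∀ k, v x * pd (lap v) k x + lap v x * pd v k x
      = d * ∑ i, pd v i x * hess v k i x := by
    intro k
    have h0 := hFk k
    rw [pd_sub (f := fun y => v y * lap v y) (g := fun y => d / 2 * ∑ i, pd v i y ^ 2) ((dv x).mul (dlap x)) ((DifferentiableAt.fun_sum
        (fun i _ => (dpd i x).pow 2)).const_mul (d / 2)) k] at h0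
    rw [pd_mul (dv x) (dlap x) k] at h0
    rw [pd_const_mul (f := fun y => ∑ i, pd v i y ^ 2) (DifferentiableAt.fun_sum fun i _ => (dpd i x).pow 2) (d / 2) k] at h0
    rw [pd_sum Finset.univ (fun i => fun y => pd v i y ^ 2)
        (fun i _ => (dpd i x).pow 2) k] at h0
    rw [Finset.sum_congr rfl (fun i _ => pd_sq (dpd i x) k)] at h0
    have hs : ∑ i, 2 * pd v i x * pd (pd v i) k x = 2 * ∑ i, pd v i x * hess v k i x := by
      rw [Finset.mul_sum]
      exact Finset.sum_congr rfl fun i _ => by rw [show pd (pd v i) k x = hess v k i x from rfl]; ring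
    rw [hs] at h0
    linarith
  -- per-index formula for the divergence summand
  have key : ∀ i, pd (fun y => v y ^ (1 - d) *
      ((∑ j, pd v j y * hess v j i y) - lap v y / d * pd v i y)) i x
      = (1 - d) * W * (pd v i x * ∑ j, pd v j x * hess v i j x)
        - (1 - d) * W * (lap v x / d) * pd v i x ^ 2
        + (v x * W) * (∑ j, hess v i j x ^ 2)
        + (v x * W) * (∑ j, pd v j x * pd (hess v i i) j x)
        - (v x * W / d) * (pd v i x * pd (lap v) i x)
        - (v x * W * (lap v x / d)) * hess v i i x := by
    intro i
    rw [pd_mul dR (dBr i) i]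
    rw [pd_rpow (dv x) (hpos x).ne' (1 - d) i]
    rw [show (1 : ℝ) - d - 1 = -d by ring]
    rw [pd_sub (dA i) (dB i) i]
    have h4 : pd (fun y => ∑ j, pd v j y * hess v j i y) i x
        = ∑ j, (pd v j x * pd (hess v i i) j x + hess v i j x ^ 2) := by
      rw [pd_sum Finset.univ (fun j => fun y => pd v j y * hess v j i y)
          (fun j _ => (dpd j x).mul (dhess j i x)) i]
      refine Finset.sum_congr rfl fun j _ => ?_
      rw [pd_mul (dpd j x) (dhess j i x) i]
      rw [hswap3 i j]
      rw [show pd (pd v j) i x = hess v i j x from rfl]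
      rw [hsymm2 j i]
      ring
    rw [h4]
    have h5 : pd (fun y => lap v y / d * pd v i y) i x
        = lap v x / d * hess v i i x + pd v i x * (pd (lap v) i x / d) := by
      rw [pd_mul dC (dpd i x) i]
      rw [pd_div_const (dlap x) d i]
      rfl
    rw [h5]
    have hsval : (∑ j, pd v j x * hess v j i x) = ∑ j, pd v j x * hess v i j x :=
      Finset.sum_congr rfl fun j _ => by rw [hsymm2 j i]
    rw [hsval, Finset.sum_add_distrib, hVW]
    ring
  -- sum it up
  have e0 : vdiv (fun i y => v y ^ (1 - d) *
      ((∑ j, pd v j y * hess v j i y) - lap v y / d * pd v i y)) x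
      = ∑ i, pd (fun y => v y ^ (1 - d) *
          ((∑ j, pd v j y * hess v j i y) - lap v y / d * pd v i y)) i x := rfl
  have total : (∑ i, pd (fun y => v y ^ (1 - d) *
      ((∑ j, pd v j y * hess v j i y) - lap v y / d * pd v i y)) i x)
      = (1 - d) * W * (∑ i, pd v i x * ∑ j, pd v j x * hess v i j x)
        - (1 - d) * W * (lap v x / d) * (∑ i, pd v i x ^ 2)
        + (v x * W) * (∑ i, ∑ j, hess v i j x ^ 2)
        + (v x * W) * (∑ i, ∑ j, pd v j x * pd (hess v i i) j x)
        - (v x * W / d) * (∑ i, pd v i x * pd (lap v) i x)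
        - (v x * W * (lap v x / d)) * lap v x := by
    rw [Finset.sum_congr rfl fun i _ => key i]
    simp only [Finset.sum_add_distrib, Finset.sum_sub_distrib, ← Finset.mul_sum]
    rw [hlapdef]
  -- exchange of third derivatives packaged at the level of sums
  have hQ : (∑ i, ∑ j, pd v j x * pd (hess v i i) j x)
      = ∑ i, pd v i x * pd (lap v) i x := by
    rw [Finset.sum_comm]
    refine Finset.sum_congr rfl fun j _ => ?_
    rw [← Finset.mul_sum]
    congr 1
    exact (pd_sum Finset.univ (fun i => hess v i i) (fun i _ => dhess i i x) j).symm
  -- summed differentiated PDE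
  have hP : lap v x * (∑ i, pd v i x ^ 2) + v x * (∑ i, pd v i x * pd (lap v) i x)
      = d * ∑ i, pd v i x * ∑ j, pd v j x * hess v i j x := by
    have h2 := Finset.sum_congr rfl
      (fun k (_ : k ∈ (Finset.univ : Finset (Fin n))) => congrArg (fun t => pd v k x * t) (hk k))
    have l : ∑ k, pd v k x * (v x * pd (lap v) k x + lap v x * pd v k x)
        = v x * (∑ k, pd v k x * pd (lap v) k x) + lap v x * (∑ k, pd v k x ^ 2) := by
      simp only [Finset.mul_sum]
      rw [← Finset.sum_add_distrib]
      exact Finset.sum_congr rfl fun k _ => by ring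
    have r : ∑ k, pd v k x * (d * ∑ i, pd v i x * hess v k i x)
        = d * ∑ k, pd v k x * ∑ i, pd v i x * hess v k i x := by
      rw [Finset.mul_sum]
      exact Finset.sum_congr rfl fun k _ => by ring
    rw [l, r] at h2
    linarith
  -- expansion of the right-hand side norm
  have hRHS : (∑ i, ∑ j, (hess v i j x - (if i = j then lap v x / n else 0)) ^ 2)
      = (∑ i, ∑ j, hess v i j x ^ 2) - (lap v x) ^ 2 / n := by
    have hi : ∀ i : Fin n, (∑ j, (hess v i j x - (if i = j then lap v x / n else 0)) ^ 2)
        = (∑ j, hess v i j x ^ 2)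
          - (2 * (lap v x / n) * hess v i i x - (lap v x / n) ^ 2) := by
      intro i
      have e : ∀ j, (hess v i j x - (if i = j then lap v x / n else 0)) ^ 2
          = hess v i j x ^ 2
            - (if i = j then 2 * (lap v x / n) * hess v i j x - (lap v x / n) ^ 2 else 0) := by
        intro j
        by_cases h : i = j
        · simp [h]; ring
        · simp [h]
      rw [Finset.sum_congr rfl fun j _ => e j, Finset.sum_sub_distrib]
      congr 1
      rw [Finset.sum_ite_eq]
      simp
    rw [Finset.sum_congr rfl fun i _ => hi i, Finset.sum_sub_distrib, Finset.sum_sub_distrib]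
    rw [← Finset.mul_sum, hlapdef]
    rw [Finset.sum_const, Finset.card_univ, Fintype.card_fin, nsmul_eq_mul]
    field_simp
    ring
  -- put everything together
  rw [e0, total, hQ, hRHS, hVW]
  have he : d * d⁻¹ = 1 := mul_inv_cancel₀ hd0
  set S := ∑ i, pd v i x * ∑ j, pd v j x * hess v i j x with hS
  set P := ∑ i, pd v i x * pd (lap v) i x with hPdef
  linear_combination (W * (d - 1) * d⁻¹) * hP + ((d - 1) * W * S - v x * W * P) * he
end
end

section
/- Let n ≥ 3 and R > 0. For 0 < λ < (n−2)/2 and H ≥ 0, the function u(x) = (n(n−1)/R)^{(n−2)/4} ((1/(2ε))|x|² + ε/2)^{−(n−2)/2} on the closed unit ball B^n, with ε = √(n(n−1)/R)·( ((n−2)/(2λ))(H/(n−1)) + √( ((n−2)/(2λ))²(H/(n−1))² + (R/(n(n−1)))((n−2)/λ − 1) ) ), is a positive solution of −Δu = ((n−2)/(4(n−1)))R u^{(n+2)/(n−2)} in B^n with ∂u/∂ν + λu = ((n−2)/(2(n−1)))H u^{n/(n−2)} on S^{n−1}. -/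
noncomputable section

open Real MeasureTheory Metric

variable {n : ℕ}

lemma normsq (x : EuclideanSpace ℝ (Fin n)) : ‖x‖^2 = ∑ i, x i ^ 2 := by
  rw [EuclideanSpace.norm_eq, Real.sq_sqrt (by positivity)]
  simp [sq_abs]

lemma coord_hasFDerivAt (i : Fin n) (x : EuclideanSpace ℝ (Fin n)) :
    HasFDerivAt (fun y : EuclideanSpace ℝ (Fin n) => y i)
      (innerSL ℝ (EuclideanSpace.single i (1:ℝ))) x := by
  have h : (fun y : EuclideanSpace ℝ (Fin n) => y i)
      = fun y => (innerSL ℝ (EuclideanSpace.single i (1:ℝ))) y := by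
    funext y
    simp [EuclideanSpace.inner_single_left]
  rw [h]
  exact (innerSL ℝ (EuclideanSpace.single i (1:ℝ))).hasFDerivAt

lemma base_hasFDerivAt (a b : ℝ) (x : EuclideanSpace ℝ (Fin n)) :
    HasFDerivAt (fun y : EuclideanSpace ℝ (Fin n) => a * ‖y‖^2 + b)
      (a • (2 • (innerSL ℝ x))) x :=
  (((hasStrictFDerivAt_norm_sq x).hasFDerivAt).const_mul a).add_const b

lemma u_hasFDerivAt (a b p c : ℝ) (x : EuclideanSpace ℝ (Fin n))
    (hx : a * ‖x‖^2 + b ≠ 0) :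
    HasFDerivAt (fun y : EuclideanSpace ℝ (Fin n) => c * (a * ‖y‖^2 + b) ^ p)
      (c • ((p * (a * ‖x‖^2 + b) ^ (p-1)) • (a • (2 • (innerSL ℝ x))))) x :=
  (((base_hasFDerivAt a b x).rpow_const (Or.inl hx)).const_mul c)

lemma pd_u (a b p c : ℝ) (hb : ∀ y : EuclideanSpace ℝ (Fin n), a * ‖y‖^2 + b ≠ 0)
    (i : Fin n) (x : EuclideanSpace ℝ (Fin n)) :
    pd (fun y => c * (a * ‖y‖^2 + b) ^ p) i x
      = (c * p * (2*a)) * ((a * ‖x‖^2 + b) ^ (p-1) * x i) := by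
  rw [pd, (u_hasFDerivAt a b p c x (hb x)).fderiv]
  simp [EuclideanSpace.inner_single_right]
  ring

lemma hess_u (a b p c : ℝ) (hb : ∀ y : EuclideanSpace ℝ (Fin n), a * ‖y‖^2 + b ≠ 0)
    (i : Fin n) (x : EuclideanSpace ℝ (Fin n)) :
    hess (fun y => c * (a * ‖y‖^2 + b) ^ p) i i x
      = (c * p * (2*a)) * ((p-1) * (a * ‖x‖^2 + b) ^ (p-2) * (2*a) * (x i)^2
          + (a * ‖x‖^2 + b) ^ (p-1)) := by
  have hfun : pd (fun y : EuclideanSpace ℝ (Fin n) => c * (a * ‖y‖^2 + b) ^ p) i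
      = fun y => (c * p * (2*a)) * ((a * ‖y‖^2 + b) ^ (p-1) * y i) := by
    funext y; exact pd_u a b p c hb i y
  rw [hess, hfun]
  have h1 : HasFDerivAt (fun y : EuclideanSpace ℝ (Fin n) => (a * ‖y‖^2 + b) ^ (p-1))
      (((p-1) * (a * ‖x‖^2 + b) ^ (p-1-1)) • (a • (2 • (innerSL ℝ x)))) x :=
    (base_hasFDerivAt a b x).rpow_const (Or.inl (hb x))
  have h2 := (h1.mul (coord_hasFDerivAt i x)).const_mul (c * p * (2*a))
  rw [pd, (show HasFDerivAt (fun y : EuclideanSpace ℝ (Fin n) =>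
      (c * p * (2*a)) * ((a * ‖y‖^2 + b) ^ (p-1) * y i)) _ x from h2).fderiv]
  have : (p - 1 - 1) = p - 2 := by ring
  rw [this] at *
  simp [EuclideanSpace.inner_single_right, EuclideanSpace.inner_single_left,
    EuclideanSpace.single_apply]
  ring

lemma lap_u (a b p c : ℝ) (hb : ∀ y : EuclideanSpace ℝ (Fin n), a * ‖y‖^2 + b ≠ 0)
    (x : EuclideanSpace ℝ (Fin n)) :
    lap (fun y => c * (a * ‖y‖^2 + b) ^ p) x
      = (c * p * (2*a)) * ((p-1) * (a * ‖x‖^2 + b) ^ (p-2) * (2*a) * ‖x‖^2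
          + (n:ℝ) * (a * ‖x‖^2 + b) ^ (p-1)) := by
  rw [lap]
  rw [Finset.sum_congr rfl (fun i _ => hess_u a b p c hb i x)]
  rw [← Finset.mul_sum]
  congr 1
  rw [Finset.sum_add_distrib, ← Finset.mul_sum, ← normsq, Finset.sum_const,
    Finset.card_fin, nsmul_eq_mul]


/-- For `n ≥ 3`, `R > 0`, `H ≥ 0`, `0 < λ < (n−2)/2`, the explicit radial function
`u(x) = (n(n−1)/R)^{(n−2)/4} ((1/(2ε))|x|² + ε/2)^{−(n−2)/2}` with the stated `ε > 0` is a
positive solution of `−Δu = ((n−2)/(4(n−1)))R u^{(n+2)/(n−2)}` in `B^n` with the nonlinear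
boundary condition `∂u/∂ν + λu = ((n−2)/(2(n−1)))H u^{n/(n−2)}` on `S^{n−1}` (where
`ν(x) = x`, so `∂u/∂ν = ⟨∇u, x⟩` on the unit sphere). -/
theorem stmt19 (n : ℕ) (hn : 3 ≤ n) (R H lam : ℝ) (hR : 0 < R) (hH : 0 ≤ H)
    (hlam : 0 < lam) (hlam' : lam < ((n : ℝ) - 2) / 2) (ε : ℝ)
    (hε : ε = Real.sqrt ((n : ℝ) * (n - 1) / R) *
      (((n : ℝ) - 2) / (2 * lam) * (H / (n - 1)) +
        Real.sqrt ((((n : ℝ) - 2) / (2 * lam)) ^ 2 * (H / (n - 1)) ^ 2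
          + R / ((n : ℝ) * (n - 1)) * (((n : ℝ) - 2) / lam - 1))))
    (u : EuclideanSpace ℝ (Fin n) → ℝ)
    (hu : u = fun x => ((n : ℝ) * (n - 1) / R) ^ (((n : ℝ) - 2) / 4) *
      (1 / (2 * ε) * ‖x‖ ^ 2 + ε / 2) ^ (-(((n : ℝ) - 2) / 2))) :
    0 < ε ∧
    (∀ x, 0 < u x) ∧
    (∀ x : EuclideanSpace ℝ (Fin n), ‖x‖ ≤ 1 →
      -lap u x = ((n : ℝ) - 2) / (4 * ((n : ℝ) - 1)) * R
        * u x ^ (((n : ℝ) + 2) / ((n : ℝ) - 2))) ∧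
    (∀ x : EuclideanSpace ℝ (Fin n), ‖x‖ = 1 →
      (∑ i, pd u i x * x i) + lam * u x
        = ((n : ℝ) - 2) / (2 * ((n : ℝ) - 1)) * H * u x ^ ((n : ℝ) / ((n : ℝ) - 2))) := by
  have hN3 : (3:ℝ) ≤ (n:ℝ) := by exact_mod_cast hn
  have hN2 : (0:ℝ) < (n:ℝ) - 2 := by linarith
  have hN1 : (0:ℝ) < (n:ℝ) - 1 := by linarith
  have hN0 : (0:ℝ) < (n:ℝ) := by linarith
  have hK : (0:ℝ) < (n:ℝ) * ((n:ℝ)-1) / R := by positivity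
  have hQ : (0:ℝ) < ((n:ℝ)-2)/lam - 1 := by
    have : (1:ℝ) < ((n:ℝ)-2)/lam := by
      rw [lt_div_iff₀ hlam]; nlinarith
    linarith
  have hDpos : 0 < (((n : ℝ) - 2) / (2 * lam)) ^ 2 * (H / ((n:ℝ) - 1)) ^ 2
      + R / ((n : ℝ) * ((n:ℝ) - 1)) * (((n : ℝ) - 2) / lam - 1) := by
    have h1 : (0:ℝ) ≤ (((n : ℝ) - 2) / (2 * lam)) ^ 2 * (H / ((n:ℝ) - 1)) ^ 2 := by positivity
    have h2 : (0:ℝ) < R / ((n : ℝ) * ((n:ℝ) - 1)) * (((n : ℝ) - 2) / lam - 1) := by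
      apply mul_pos (by positivity) hQ
    linarith
  have hA : (0:ℝ) ≤ ((n : ℝ) - 2) / (2 * lam) * (H / ((n:ℝ) - 1)) := by positivity
  have hε0 : 0 < ε := by
    rw [hε]
    apply mul_pos (Real.sqrt_pos.2 hK)
    have := Real.sqrt_pos.2 hDpos
    linarith
  refine ⟨hε0, ?_, ?_, ?_⟩
  · intro x
    rw [hu]
    have : (0:ℝ) < 1 / (2 * ε) * ‖x‖ ^ 2 + ε / 2 := by positivity
    positivity
  · intro x _
    rw [hu]
    have hb : ∀ y : EuclideanSpace ℝ (Fin n), 1/(2*ε) * ‖y‖^2 + ε/2 ≠ 0 := fun y => by positivity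
    rw [lap_u (1/(2*ε)) (ε/2) (-(((n:ℝ)-2)/2)) (((n:ℝ)*((n:ℝ)-1)/R) ^ (((n:ℝ)-2)/4)) hb x]
    have hT : (0:ℝ) < 1/(2*ε) * ‖x‖^2 + ε/2 := by positivity
    have hFp1 : (1/(2*ε) * ‖x‖^2 + ε/2) ^ (-(((n:ℝ)-2)/2) - 1)
        = (1/(2*ε) * ‖x‖^2 + ε/2) ^ (-(((n:ℝ)-2)/2) - 2) * (1/(2*ε) * ‖x‖^2 + ε/2) := by
      rw [show -(((n:ℝ)-2)/2) - 1 = (-(((n:ℝ)-2)/2) - 2) + 1 by ring,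
        Real.rpow_add_one hT.ne']
    have hRHS : ((((n:ℝ)*((n:ℝ)-1)/R) ^ (((n:ℝ)-2)/4)) *
          (1/(2*ε) * ‖x‖^2 + ε/2) ^ (-(((n:ℝ)-2)/2))) ^ (((n:ℝ)+2)/((n:ℝ)-2))
        = ((((n:ℝ)*((n:ℝ)-1)/R) ^ (((n:ℝ)-2)/4)) * ((n:ℝ)*((n:ℝ)-1)/R)) *
          (1/(2*ε) * ‖x‖^2 + ε/2) ^ (-(((n:ℝ)-2)/2) - 2) := by
      rw [Real.mul_rpow (by positivity) (by positivity), ← Real.rpow_mul hK.le,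
        ← Real.rpow_mul hT.le,
        show (((n:ℝ)-2)/4) * (((n:ℝ)+2)/((n:ℝ)-2)) = ((n:ℝ)-2)/4 + 1 by
          field_simp; ring,
        show (-(((n:ℝ)-2)/2)) * (((n:ℝ)+2)/((n:ℝ)-2)) = -(((n:ℝ)-2)/2) - 2 by
          field_simp; ring,
        Real.rpow_add_one hK.ne']
    rw [hFp1, hRHS]
    field_simp
    ring
  · intro x hx1
    rw [hu]
    have hb : ∀ y : EuclideanSpace ℝ (Fin n), 1/(2*ε) * ‖y‖^2 + ε/2 ≠ 0 := fun y => by positivity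
    have hx2 : ‖x‖^2 = (1:ℝ) := by rw [hx1]; norm_num
    set d := Real.sqrt ((((n : ℝ) - 2) / (2 * lam)) ^ 2 * (H / ((n:ℝ) - 1)) ^ 2
        + R / ((n : ℝ) * ((n:ℝ) - 1)) * (((n : ℝ) - 2) / lam - 1)) with hd
    set s := Real.sqrt ((n:ℝ) * ((n:ℝ) - 1) / R) with hs
    have hss : s * s = (n:ℝ) * ((n:ℝ) - 1) / R := by
      rw [hs]; exact Real.mul_self_sqrt hK.le
    have hs2 : s ^ 2 = (n:ℝ) * ((n:ℝ) - 1) / R := by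
      rw [hs]; exact Real.sq_sqrt hK.le
    have hd2 : d ^ 2 = (((n : ℝ) - 2) / (2 * lam)) ^ 2 * (H / ((n:ℝ) - 1)) ^ 2
        + R / ((n : ℝ) * ((n:ℝ) - 1)) * (((n : ℝ) - 2) / lam - 1) := by
      rw [hd]; exact Real.sq_sqrt hDpos.le
    have hsε : s * ε = ((n:ℝ) * ((n:ℝ) - 1) / R) *
        (((n : ℝ) - 2) / (2 * lam) * (H / ((n:ℝ) - 1)) + d) := by
      rw [hε, ← mul_assoc, hss]
    have hε2 : ε ^ 2 = ((n:ℝ) * ((n:ℝ) - 1) / R) *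
        (((n : ℝ) - 2) / (2 * lam) * (H / ((n:ℝ) - 1)) + d) ^ 2 := by
      rw [hε, mul_pow, hs2]
    have key : lam * ε ^ 2 + lam - ((n:ℝ) - 2) = ((n:ℝ) - 2) * H / ((n:ℝ) - 1) * (s * ε) := by
      rw [hε2, hsε, add_sq, hd2]
      field_simp
      ring
    have tgt : (-(((n:ℝ)-2)/2)) * (2 * (1/(2*ε))) + lam * (1/(2*ε) * 1 + ε/2)
        = ((n:ℝ)-2) / (2*((n:ℝ)-1)) * H * s := by
      have hεne : ε ≠ 0 := hε0.ne'
      have hn1ne : (n:ℝ) - 1 ≠ 0 := hN1.ne'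
      calc (-(((n:ℝ)-2)/2)) * (2 * (1/(2*ε))) + lam * (1/(2*ε) * 1 + ε/2)
          = (lam * ε ^ 2 + lam - ((n:ℝ) - 2)) / (2 * ε) := by field_simp; ring
        _ = ((n:ℝ)-2) / (2*((n:ℝ)-1)) * H * s := by rw [key]; field_simp
    have hT : (0:ℝ) < 1/(2*ε) * (1:ℝ) + ε/2 := by positivity
    have hpd : ∀ i, pd (fun y : EuclideanSpace ℝ (Fin n) =>
          ((n:ℝ)*((n:ℝ)-1)/R) ^ (((n:ℝ)-2)/4) * (1/(2*ε) * ‖y‖^2 + ε/2) ^ (-(((n:ℝ)-2)/2))) i x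
        = (((n:ℝ)*((n:ℝ)-1)/R) ^ (((n:ℝ)-2)/4) * (-(((n:ℝ)-2)/2)) * (2*(1/(2*ε))))
          * ((1/(2*ε) * ‖x‖^2 + ε/2) ^ (-(((n:ℝ)-2)/2) - 1) * x i) :=
      fun i => pd_u _ _ _ _ hb i x
    simp only [hpd]
    simp only [show ∀ (A B xi : ℝ), A * (B * xi) * xi = (A*B)*xi^2 from fun A B xi => by ring]
    rw [← Finset.mul_sum, ← normsq, hx2, mul_one]
    have hRHS2 : (((n:ℝ)*((n:ℝ)-1)/R) ^ (((n:ℝ)-2)/4)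
          * (1/(2*ε) * (1:ℝ) + ε/2) ^ (-(((n:ℝ)-2)/2))) ^ ((n:ℝ)/((n:ℝ)-2))
        = (((n:ℝ)*((n:ℝ)-1)/R) ^ (((n:ℝ)-2)/4) * s)
          * (1/(2*ε) * (1:ℝ) + ε/2) ^ (-(((n:ℝ)-2)/2) - 1) := by
      rw [Real.mul_rpow (by positivity) (by positivity), ← Real.rpow_mul hK.le,
        ← Real.rpow_mul hT.le,
        show (((n:ℝ)-2)/4) * ((n:ℝ)/((n:ℝ)-2)) = ((n:ℝ)-2)/4 + 1/2 by field_simp; ring,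
        show (-(((n:ℝ)-2)/2)) * ((n:ℝ)/((n:ℝ)-2)) = -(((n:ℝ)-2)/2) - 1 by field_simp; ring,
        Real.rpow_add hK, ← Real.sqrt_eq_rpow, ← hs]
    rw [hRHS2]
    have hTP : (1/(2*ε) * (1:ℝ) + ε/2) ^ (-(((n:ℝ)-2)/2))
        = (1/(2*ε) * (1:ℝ) + ε/2) ^ (-(((n:ℝ)-2)/2) - 1) * (1/(2*ε) * (1:ℝ) + ε/2) := by
      conv_lhs => rw [show -(((n:ℝ)-2)/2) = (-(((n:ℝ)-2)/2) - 1) + 1 by ring,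
        Real.rpow_add_one hT.ne']
    rw [hTP]
    linear_combination ((((n:ℝ)*((n:ℝ)-1)/R) ^ (((n:ℝ)-2)/4))
      * ((1/(2*ε) * (1:ℝ) + ε/2) ^ (-(((n:ℝ)-2)/2) - 1))) * tgt
end
end
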